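/- arXiv:math/0602405 — 4 statements merged into one kernel-verified Lean document; each statement's English description precedes it below -/
import Mathlib

section
/- For 0 ≤ k ≤ m_i - 1, q_i(x)^k ≢ 0 (mod h(x)), so q_i has nilpotency index exactly m_i in ℝ[x]/(h). -/
open Polynomial

theorem stmt7
    (r : ℕ) (hr : 0 < r) (x : Fin r → ℝ) (hx : Function.Injective x)
    (m : Fin r → ℕ) (hm : ∀ i, 1 ≤ m i)
    (h : Polynomial ℝ) (hh : h = ∏ i, (X - C (x i)) ^ m i)
    (hi : Fin r → Polynomial ℝ)
    (hhi : ∀ i, hi i = ∏ j ∈ Finset.univ.erase i, (X - C (x j)) ^ m j)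
    (u : Fin r → Polynomial ℝ)
    (hu : ∀ i, (X - C (x i)) ^ m i ∣ u i * hi i - 1)
    (s : Fin r → Polynomial ℝ) (hs : ∀ i, s i = u i * hi i)
    (q : Fin r → Polynomial ℝ) (hq : ∀ i, h ∣ q i - (X - C (x i)) * s i)
    : ∀ i, ∀ k ≤ m i - 1, ¬ h ∣ (q i) ^ k := by
  intro i k hk hdvd
  set p := (X - C (x i)) ^ m i with hp
  have hph : p ∣ h := hh ▸ Finset.dvd_prod_of_mem _ (Finset.mem_univ i)
  have h1 : p ∣ q i - (X - C (x i)) * s i := hph.trans (hq i)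
  have h2 : p ∣ s i - 1 := by rw [hs]; exact hu i
  have h3 : p ∣ q i - (X - C (x i)) := by
    have heq : q i - (X - C (x i)) =
        (q i - (X - C (x i)) * s i) + (X - C (x i)) * (s i - 1) := by ring
    rw [heq]; exact dvd_add h1 (h2.mul_left _)
  have h4 : p ∣ q i ^ k - (X - C (x i)) ^ k := h3.trans (sub_dvd_pow_sub_pow _ _ k)
  have h5 : p ∣ (X - C (x i)) ^ k := by
    have := dvd_sub (hph.trans hdvd) h4
    simpa using this
  have hk' : k < m i := Nat.lt_of_le_of_lt hk (Nat.sub_lt (hm i) one_pos)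
  have hnu : ¬ IsUnit (X - C (x i)) := Polynomial.not_isUnit_X_sub_C _
  have : m i ≤ k := (pow_dvd_pow_iff (Polynomial.X_sub_C_ne_zero _) hnu).mp h5
  omega
end

section
/- Modulo h(x), the identity x ≡ ∑_{i=1}^r (x_i·s_i(x) + q_i(x)) holds. -/
open Polynomial

theorem stmt8
    (r : ℕ) (hr : 0 < r) (x : Fin r → ℝ) (hx : Function.Injective x)
    (m : Fin r → ℕ) (hm : ∀ i, 1 ≤ m i)
    (h : Polynomial ℝ) (hh : h = ∏ i, (X - C (x i)) ^ m i)
    (hi : Fin r → Polynomial ℝ)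
    (hhi : ∀ i, hi i = ∏ j ∈ Finset.univ.erase i, (X - C (x j)) ^ m j)
    (u : Fin r → Polynomial ℝ)
    (hu : ∀ i, (X - C (x i)) ^ m i ∣ u i * hi i - 1)
    (s : Fin r → Polynomial ℝ) (hs : ∀ i, s i = u i * hi i)
    (q : Fin r → Polynomial ℝ) (hq : ∀ i, h ∣ q i - (X - C (x i)) * s i)
    : h ∣ (∑ i, (C (x i) * s i + q i)) - X := by
  have hd1 : h ∣ ∑ i, (q i - (X - C (x i)) * s i) :=
    Finset.dvd_sum fun i _ => hq i
  have hd2 : h ∣ (∑ i, s i) - 1 := by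
    rw [hh]
    exact Fintype.prod_dvd_of_coprime
      (fun _ _ hij => (pairwise_coprime_X_sub_C hx hij).pow)
      (fun j => by
        rw [← Finset.add_sum_erase _ s (Finset.mem_univ j)]
        have h1 : (X - C (x j)) ^ m j ∣ s j - 1 := by rw [hs]; exact hu j
        have h2 : (X - C (x j)) ^ m j ∣ ∑ i ∈ Finset.univ.erase j, s i := by
          refine Finset.dvd_sum fun i hij => ?_
          rw [hs]
          refine Dvd.dvd.mul_left ?_ _
          rw [hhi]
          exact Finset.dvd_prod_of_mem _
            (Finset.mem_erase.mpr ⟨(Finset.mem_erase.mp hij).1.symm, Finset.mem_univ _⟩)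
        have := h1.add h2
        convert this using 1
        ring)
  have key : (∑ i, (C (x i) * s i + q i)) - X
      = (∑ i, (q i - (X - C (x i)) * s i)) + X * ((∑ i, s i) - 1) := by
    simp only [Finset.sum_add_distrib, Finset.sum_sub_distrib, Finset.mul_sum, mul_comm,
      mul_sub, sub_mul]
    ring_nf
    rw [Finset.mul_sum]
    simp [mul_comm]
  rw [key]
  exact hd1.add (Dvd.dvd.mul_left hd2 X)
end

section
/- For every natural number k, x^k ≡ ∑_{i=1}^r ∑_{j=0}^{min(k, m_i-1)} C(k,j)·x_i^{k-j}·q_i(x)^j (mod h(x)), where q_i^0 denotes s_i. -/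
open Polynomial

theorem stmt9
    (r : ℕ) (hr : 0 < r) (x : Fin r → ℝ) (hx : Function.Injective x)
    (m : Fin r → ℕ) (hm : ∀ i, 1 ≤ m i)
    (h : Polynomial ℝ) (hh : h = ∏ i, (X - C (x i)) ^ m i)
    (hi : Fin r → Polynomial ℝ)
    (hhi : ∀ i, hi i = ∏ j ∈ Finset.univ.erase i, (X - C (x j)) ^ m j)
    (u : Fin r → Polynomial ℝ)
    (hu : ∀ i, (X - C (x i)) ^ m i ∣ u i * hi i - 1)
    (s : Fin r → Polynomial ℝ) (hs : ∀ i, s i = u i * hi i)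
    (q : Fin r → Polynomial ℝ) (hq : ∀ i, h ∣ q i - (X - C (x i)) * s i)
    : ∀ k : ℕ, h ∣ X ^ k -
      ∑ i, ∑ j ∈ Finset.range (min k (m i - 1) + 1),
        C ((k.choose j : ℝ) * x i ^ (k - j)) * (s i * (X - C (x i)) ^ j) := by
  intro k
  -- h factors as (X - x i)^{m i} * hi i
  have hsplit : ∀ i, h = (X - C (x i)) ^ m i * hi i := by
    intro i
    rw [hh, hhi]
    exact (Finset.mul_prod_erase Finset.univ (fun j => (X - C (x j)) ^ m j) (Finset.mem_univ i)).symm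
  -- h divides (X - x i)^{m i} * s i
  have hdvd_pow : ∀ i, h ∣ (X - C (x i)) ^ m i * s i := by
    intro i
    refine ⟨u i, ?_⟩
    rw [hs, hsplit i]; ring
  -- claim 1 : h ∣ (∑ s i) - 1
  have claim1 : h ∣ (∑ i, s i) - 1 := by
    rw [hh]
    refine Finset.prod_dvd_of_coprime ?_ ?_
    · intro a _ b _ hab
      exact ((pairwise_coprime_X_sub_C hx) hab).pow
    · intro j _
      have : (∑ i, s i) - 1 = (s j - 1) + ∑ i ∈ Finset.univ.erase j, s i := by
        rw [← Finset.add_sum_erase _ _ (Finset.mem_univ j)]; ring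
      rw [this]
      refine dvd_add ?_ (Finset.dvd_sum ?_)
      · rw [hs]; exact hu j
      · intro i hij
        have hji : j ∈ Finset.univ.erase i := by
          simp only [Finset.mem_erase, Finset.mem_univ, and_true] at *
          exact fun e => hij e.symm
        have : (X - C (x j)) ^ m j ∣ hi i := by
          rw [hhi]; exact Finset.dvd_prod_of_mem _ hji
        rw [hs]
        exact this.mul_left _
  -- binomial expansion of s i * X ^ k
  have claim2 : ∀ i, h ∣ s i * X ^ k -
      ∑ j ∈ Finset.range (min k (m i - 1) + 1),
        C ((k.choose j : ℝ) * x i ^ (k - j)) * (s i * (X - C (x i)) ^ j) := by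
    intro i
    have hbin : X ^ k = ∑ j ∈ Finset.range (k + 1),
        (X - C (x i)) ^ j * C (x i) ^ (k - j) * (k.choose j : Polynomial ℝ) := by
      have := add_pow (X - C (x i)) (C (x i)) k
      rw [sub_add_cancel] at this
      exact this
    have hterm : ∀ j, C ((k.choose j : ℝ) * x i ^ (k - j)) * (s i * (X - C (x i)) ^ j)
        = s i * ((X - C (x i)) ^ j * C (x i) ^ (k - j) * (k.choose j : Polynomial ℝ)) := by
      intro j
      simp only [C_mul, C_pow, ← C_eq_natCast]
      ring
    rcases le_or_gt k (m i - 1) with hk | hk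
    · rw [min_eq_left hk]
      have : s i * X ^ k = ∑ j ∈ Finset.range (k + 1),
          C ((k.choose j : ℝ) * x i ^ (k - j)) * (s i * (X - C (x i)) ^ j) := by
        rw [hbin, Finset.mul_sum]
        exact Finset.sum_congr rfl fun j _ => (hterm j).symm
      rw [this, sub_self]
      exact dvd_zero h
    · rw [min_eq_right hk.le]
      have hmk : m i - 1 + 1 = m i := Nat.succ_pred_eq_of_pos (hm i)
      rw [hmk]
      have hmle : m i ≤ k + 1 := by omega
      have hsum : s i * X ^ k =
          (∑ j ∈ Finset.range (m i), C ((k.choose j : ℝ) * x i ^ (k - j)) * (s i * (X - C (x i)) ^ j))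
          + ∑ j ∈ Finset.Ico (m i) (k + 1),
              C ((k.choose j : ℝ) * x i ^ (k - j)) * (s i * (X - C (x i)) ^ j) := by
        rw [hbin, Finset.mul_sum]
        rw [Finset.range_eq_Ico, ← Finset.sum_Ico_consecutive _ (Nat.zero_le (m i)) hmle,
          ← Finset.range_eq_Ico]
        congr 1 <;> exact Finset.sum_congr rfl fun j _ => (hterm j).symm
      rw [hsum, add_sub_cancel_left]
      refine Finset.dvd_sum ?_
      intro j hj
      rw [Finset.mem_Ico] at hj
      have : (X - C (x i)) ^ j = (X - C (x i)) ^ m i * (X - C (x i)) ^ (j - m i) := by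
        rw [← pow_add, Nat.add_sub_cancel' hj.1]
      rw [this]
      have : C ((k.choose j : ℝ) * x i ^ (k - j)) *
          (s i * ((X - C (x i)) ^ m i * (X - C (x i)) ^ (j - m i)))
          = ((X - C (x i)) ^ m i * s i) *
            (C ((k.choose j : ℝ) * x i ^ (k - j)) * (X - C (x i)) ^ (j - m i)) := by ring
      rw [this]
      exact (hdvd_pow i).mul_right _
  -- combine
  have key : X ^ k -
      (∑ i, ∑ j ∈ Finset.range (min k (m i - 1) + 1),
        C ((k.choose j : ℝ) * x i ^ (k - j)) * (s i * (X - C (x i)) ^ j))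
      = X ^ k * (1 - ∑ i, s i)
        + ∑ i, (s i * X ^ k -
            ∑ j ∈ Finset.range (min k (m i - 1) + 1),
              C ((k.choose j : ℝ) * x i ^ (k - j)) * (s i * (X - C (x i)) ^ j)) := by
    rw [Finset.sum_sub_distrib, ← Finset.sum_mul]
    ring
  rw [key]
  exact dvd_add (Dvd.dvd.mul_left (by simpa using claim1.neg_right) _) (Finset.dvd_sum fun i _ => claim2 i)
end

section
/- The osculating interpolation polynomial g(x) = ∑_{i=1}^r [∑_{k=0}^{m_i-1} (1/k!)·f^{(k)}(x_i)·q_i(x)^k]·s_i(x) reduced mod h(x) satisfies g^{(j)}(x_i) = f^{(j)}(x_i) for all i and all 0 ≤ j ≤ m_i - 1. -/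
/-!
Write `P = (X - x_i)^{m_i}` and `T_j(y) = ∑_{k < m_j} f^{(k)}(x_j)/k! · y^k`. Modulo `P` we
have `s_i ≡ 1` and `s_j ≡ 0` for `j ≠ i` (as `P ∣ h_j`), hence `q_i ≡ X - x_i`; and
`g ≡ ∑_j T_j(q_j) s_j` since `P ∣ h`. So `g ≡ T_i(q_i) ≡ T_i(X - x_i)`, the Taylor polynomial of
`f` at `x_i`, which is `≡ f`. Thus `P ∣ g - f`, so the derivatives of `g - f` of order below `m_i`
vanish at `x_i`.
-/

open Polynomial Finset Nat

theorem dvd_sum_mul_sub_of_dvd_sub_one {ι R : Type*} [Fintype ι] [CommRing R] {P : R}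
    (t s : ι → R) {i : ι} (hi : P ∣ s i - 1) (hj : ∀ j ≠ i, P ∣ s j) :
    P ∣ ∑ j, t j * s j - t i := by
  classical
  rw [← add_sum_erase _ _ (mem_univ i),
    show ∀ a : R, t i * s i + a - t i = t i * (s i - 1) + a by intros; ring]
  exact dvd_add (hi.mul_left _) (dvd_sum fun j hj' => (hj j (ne_of_mem_erase hj')).mul_left _)

theorem dvd_sum_mul_pow_sub_sum_mul_pow {R : Type*} [CommRing R] {P a b : R}
    (c : ℕ → R) (S : Finset ℕ) (h : P ∣ a - b) :
    P ∣ ∑ k ∈ S, c k * a ^ k - ∑ k ∈ S, c k * b ^ k := by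
  rw [← sum_sub_distrib]
  exact dvd_sum fun k _ => by
    rw [← mul_sub]
    exact (h.trans (sub_dvd_pow_sub_pow a b k)).mul_left _

namespace Polynomial

theorem X_sub_C_pow_dvd_sub_sum_taylor {K : Type*} [Field K] [CharZero K]
    (f : K[X]) (a : K) (n : ℕ) :
    (X - C a) ^ n ∣
      f - ∑ k ∈ range n, C ((derivative^[k] f).eval a / k !) * (X - C a) ^ k := by
  have hcoeff : ∀ k, (derivative^[k] f).eval a / k ! = (taylor a f).coeff k := by
    intro k
    rw [taylor_coeff, ← factorial_smul_hasseDeriv, LinearMap.smul_apply, eval_smul,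
      nsmul_eq_mul, mul_div_cancel_left₀ _ (by exact_mod_cast k.factorial_ne_zero)]
  -- the shift `taylor a` turns `X - C a` into `X`, so divisibility is read off the coefficients
  rw [← map_dvd_iff (taylorEquiv a)]
  change taylor a _ ∣ taylor a _
  simp only [taylor_pow, map_sub, map_sum, taylor_mul, taylor_C, taylor_X,
    add_sub_cancel_right, hcoeff, X_pow_dvd_iff, coeff_sub, finsetSum_coeff, coeff_C_mul_X_pow]
  intro d hd
  simp [mem_range.mpr hd]

theorem eval_iterate_derivative_eq_zero_of_pow_dvd {R : Type*} [CommRing R] {a : R} {n j : ℕ}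
    {p : R[X]} (hp : (X - C a) ^ n ∣ p) (hj : j < n) : (derivative^[j] p).eval a = 0 :=
  dvd_iff_isRoot.mp <|
    (dvd_pow_self _ (by omega)).trans (pow_sub_dvd_iterate_derivative_of_pow_dvd j hp)

end Polynomial

theorem stmt10_general
    (r : ℕ) (x : Fin r → ℝ)
    (m : Fin r → ℕ) (hm : ∀ i, 1 ≤ m i)
    (h : Polynomial ℝ) (hh : h = ∏ i, (X - C (x i)) ^ m i)
    (hi : Fin r → Polynomial ℝ)
    (hhi : ∀ i, hi i = ∏ j ∈ Finset.univ.erase i, (X - C (x j)) ^ m j)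
    (u : Fin r → Polynomial ℝ)
    (hu : ∀ i, (X - C (x i)) ^ m i ∣ u i * hi i - 1)
    (s : Fin r → Polynomial ℝ) (hs : ∀ i, s i = u i * hi i)
    (q : Fin r → Polynomial ℝ) (hq : ∀ i, h ∣ q i - (X - C (x i)) * s i)
    (f : Polynomial ℝ) (g : Polynomial ℝ)
    (hg : g = (∑ i, (∑ k ∈ Finset.range (m i),
        C ((Polynomial.derivative^[k] f).eval (x i) / k.factorial) * (q i) ^ k) * s i) %ₘ h)
    : ∀ i, ∀ j ≤ m i - 1,
      (Polynomial.derivative^[j] g).eval (x i) = (Polynomial.derivative^[j] f).eval (x i) := by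
  intro i j hj
  have hPh : (X - C (x i)) ^ m i ∣ h := hh ▸ dvd_prod_of_mem _ (mem_univ i)
  have hs_self : (X - C (x i)) ^ m i ∣ s i - 1 := hs i ▸ hu i
  have hs_other : ∀ k ≠ i, (X - C (x i)) ^ m i ∣ s k := fun k hk => by
    rw [hs k, hhi k]
    exact (dvd_prod_of_mem _ (mem_erase.mpr ⟨Ne.symm hk, mem_univ i⟩)).mul_left _
  have hq_self : (X - C (x i)) ^ m i ∣ q i - (X - C (x i)) := by
    convert dvd_add (hPh.trans (hq i)) (hs_self.mul_left (X - C (x i))) using 1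
    ring
  have hgf : (X - C (x i)) ^ m i ∣ g - f := by
    have hreduce := hg ▸ hPh.trans (dvd_modByMonic_sub _ h)
    have hselect := dvd_sum_mul_sub_of_dvd_sub_one
      (fun l => ∑ k ∈ range (m l), C ((derivative^[k] f).eval (x l) / k !) * q l ^ k) s
      hs_self hs_other
    have hsubst := dvd_sum_mul_pow_sub_sum_mul_pow
      (fun k => C ((derivative^[k] f).eval (x i) / k !)) (range (m i)) hq_self
    have htaylor := dvd_sub_comm.mp (X_sub_C_pow_dvd_sub_sum_taylor f (x i) (m i))
    have := dvd_add (dvd_add (dvd_add hreduce hselect) hsubst) htaylor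
    rwa [sub_add_sub_cancel, sub_add_sub_cancel, sub_add_sub_cancel] at this
  have hj' : j < m i := by have := hm i; omega
  have := eval_iterate_derivative_eq_zero_of_pow_dvd hgf hj'
  rwa [iterate_derivative_sub, eval_sub, sub_eq_zero] at this

theorem stmt10
    (r : ℕ) (hr : 0 < r) (x : Fin r → ℝ) (hx : Function.Injective x)
    (m : Fin r → ℕ) (hm : ∀ i, 1 ≤ m i)
    (h : Polynomial ℝ) (hh : h = ∏ i, (X - C (x i)) ^ m i)
    (hi : Fin r → Polynomial ℝ)
    (hhi : ∀ i, hi i = ∏ j ∈ Finset.univ.erase i, (X - C (x j)) ^ m j)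
    (u : Fin r → Polynomial ℝ)
    (hu : ∀ i, (X - C (x i)) ^ m i ∣ u i * hi i - 1)
    (s : Fin r → Polynomial ℝ) (hs : ∀ i, s i = u i * hi i)
    (q : Fin r → Polynomial ℝ) (hq : ∀ i, h ∣ q i - (X - C (x i)) * s i)
    (f : Polynomial ℝ) (g : Polynomial ℝ)
    (hg : g = (∑ i, (∑ k ∈ Finset.range (m i),
        C ((Polynomial.derivative^[k] f).eval (x i) / k.factorial) * (q i) ^ k) * s i) %ₘ h)
    : ∀ i, ∀ j ≤ m i - 1,
      (Polynomial.derivative^[j] g).eval (x i) = (Polynomial.derivative^[j] f).eval (x i) :=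
  stmt10_general r x m hm h hh hi hhi u hu s hs q hq f g hg
end
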